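/- Let f, g: Sⁿ⁻¹ → (0,∞) be continuous with ∫ f dx = ∫ g du, and suppose a smooth family of uniformly convex bodies M_t with support function h(x,t) and radial function ρ(u,t) evolves by ∂ₜh(x,t) = −f(x)ρ(u)ⁿ 𝒦(x,t)/g(u) + h(x,t), where u corresponds to x via the radial-normal correspondence and 𝒦 is the Gauss curvature. Then the functional J(t) = ∫_{Sⁿ⁻¹} f(x) log h(x,t) dx − ∫_{Sⁿ⁻¹} g(u) log ρ(u,t) du satisfies dJ/dt = −∫_{Sⁿ⁻¹} (g h − f 𝒦 ρⁿ)² / (g h 𝒦 ρⁿ) dx ≤ 0, with equality at time t if and only if g h = f 𝒦 ρⁿ on Sⁿ⁻¹. -/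

import Mathlib

/-!
Write `a = g(û(x))`, `H = h(x,t)`, `D = ∂ₜh(x,t)`, `K = 𝒦(x,t)` and `R = ρ(û(x),t)ⁿ`. Since
`∂ₜ log ρ = ∂ₜ log h` at corresponding points, the change of variables `(H/K) dx = R du` turns
`∫ g ∂ₜ log ρ du` into `∫ a (D/H) H/(KR) dx`, so `J' = ∫ (f - aH/(KR)) D/H dx`; substituting the
flow equation `D = -fRK/a + H`, the integrand becomes the negative defect `-(aH - fKR)²/(aHKR)`.

For the equality case (and for integrability) the `(n-1)`-dimensional Hausdorff measure of the
unit sphere must be finite and charge every nonempty relatively open subset. Both come from the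
graph charts `y ↦ y + √(1 - ‖y‖²) v` over the hyperplane `v⊥`: they are antilipschitz, and
Lipschitz over the cap `⟪v, x⟫ > 1/2`, finitely many of which cover the sphere.
-/

open MeasureTheory Metric Module Set
open scoped ENNReal RealInnerProductSpace

lemma sqrt_sub_sqrt_sq_le {a b : ℝ} (ha : 1 / 4 ≤ a) (hb : 1 / 4 ≤ b) :
    (√a - √b) ^ 2 ≤ (a - b) ^ 2 := by
  have hsa : 1 / 2 ≤ √a := Real.le_sqrt_of_sq_le (by linarith)
  have hsb : 1 / 2 ≤ √b := Real.le_sqrt_of_sq_le (by linarith)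
  have hdiff : a - b = (√a + √b) * (√a - √b) := by
    rw [← sq_sub_sq, Real.sq_sqrt (by linarith), Real.sq_sqrt (by linarith)]
  rw [hdiff, mul_pow]
  exact le_mul_of_one_le_left (sq_nonneg _) (by nlinarith)

section HemisphereChart

variable {E : Type*} [NormedAddCommGroup E] [InnerProductSpace ℝ E] {v : E}

noncomputable def hemisphereChart (v : E) (y : (ℝ ∙ v)ᗮ) : E :=
  y + √(1 - ‖y‖ ^ 2) • v

lemma norm_add_smul_sq_of_mem_orthogonal (hv : ‖v‖ = 1) {y : E} (hy : y ∈ (ℝ ∙ v)ᗮ) (a : ℝ) :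
    ‖y + a • v‖ ^ 2 = ‖y‖ ^ 2 + a ^ 2 := by
  have hyv : ⟪y, a • v⟫ = 0 := by
    rw [real_inner_smul_right, Submodule.mem_orthogonal_singleton_iff_inner_left.1 hy, mul_zero]
  rw [sq, sq, norm_add_sq_eq_norm_sq_add_norm_sq_real hyv, norm_smul, hv, mul_one,
    Real.norm_eq_abs, ← sq, ← sq, sq_abs]

lemma hemisphereChart_mem_sphere (hv : ‖v‖ = 1) {y : (ℝ ∙ v)ᗮ} (hy : ‖y‖ ≤ 1) :
    hemisphereChart v y ∈ sphere (0 : E) 1 := by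
  have h := norm_add_smul_sq_of_mem_orthogonal hv y.2 √(1 - ‖y‖ ^ 2)
  simp only [Submodule.norm_coe] at h
  rw [Real.sq_sqrt (by nlinarith [norm_nonneg y]), add_sub_cancel] at h
  rw [mem_sphere_zero_iff_norm, hemisphereChart]
  exact (pow_eq_one_iff_of_nonneg (norm_nonneg _) two_ne_zero).1 h

lemma norm_hemisphereChart_sub_sq (hv : ‖v‖ = 1) (y z : (ℝ ∙ v)ᗮ) :
    ‖hemisphereChart v y - hemisphereChart v z‖ ^ 2
      = ‖y - z‖ ^ 2 + (√(1 - ‖y‖ ^ 2) - √(1 - ‖z‖ ^ 2)) ^ 2 := by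
  have h := norm_add_smul_sq_of_mem_orthogonal hv (y - z).2 (√(1 - ‖y‖ ^ 2) - √(1 - ‖z‖ ^ 2))
  simp only [Submodule.norm_coe] at h
  rw [← h, hemisphereChart, hemisphereChart, Submodule.coe_sub, sub_smul, add_sub_add_comm]

lemma antilipschitzWith_hemisphereChart (hv : ‖v‖ = 1) :
    AntilipschitzWith 1 (hemisphereChart v) :=
  AntilipschitzWith.of_le_mul_dist fun y z => by
    rw [NNReal.coe_one, one_mul, dist_eq_norm, dist_eq_norm]
    refine (sq_le_sq₀ (norm_nonneg _) (norm_nonneg _)).1 ?_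
    rw [norm_hemisphereChart_sub_sq hv]
    exact le_add_of_nonneg_right (sq_nonneg _)

lemma continuous_hemisphereChart : Continuous (hemisphereChart v) := by
  unfold hemisphereChart
  fun_prop


lemma lipschitzOnWith_hemisphereChart (hv : ‖v‖ = 1) :
    LipschitzOnWith 2 (hemisphereChart v) {y | ‖y‖ ^ 2 ≤ 3 / 4} := by
  refine LipschitzOnWith.of_dist_le_mul fun y hy z hz => ?_
  simp only [mem_ofPred_eq] at hy hz
  rw [dist_eq_norm, dist_eq_norm, NNReal.coe_ofNat]
  refine (sq_le_sq₀ (norm_nonneg _) (by positivity)).1 ?_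
  have hsqrt := sqrt_sub_sqrt_sq_le (a := 1 - ‖y‖ ^ 2) (b := 1 - ‖z‖ ^ 2) (by linarith)
    (by linarith)
  have hnorms : (‖y‖ - ‖z‖) ^ 2 ≤ ‖y - z‖ ^ 2 :=
    sq_le_sq' (abs_le.1 (abs_norm_sub_norm_le y z)).1 (abs_le.1 (abs_norm_sub_norm_le y z)).2
  have hsum : (‖y‖ + ‖z‖) ^ 2 ≤ 3 := by nlinarith [sq_nonneg (‖y‖ - ‖z‖)]
  calc ‖hemisphereChart v y - hemisphereChart v z‖ ^ 2
      = ‖y - z‖ ^ 2 + (√(1 - ‖y‖ ^ 2) - √(1 - ‖z‖ ^ 2)) ^ 2 := norm_hemisphereChart_sub_sq hv y z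
    _ ≤ ‖y - z‖ ^ 2 + (‖y‖ - ‖z‖) ^ 2 * (‖y‖ + ‖z‖) ^ 2 := by
        have hdiff : ((1 - ‖y‖ ^ 2) - (1 - ‖z‖ ^ 2)) ^ 2 = (‖y‖ - ‖z‖) ^ 2 * (‖y‖ + ‖z‖) ^ 2 := by
          ring
        linarith
    _ ≤ ‖y - z‖ ^ 2 + ‖y - z‖ ^ 2 * 3 := by gcongr
    _ ≤ (2 * ‖y - z‖) ^ 2 := by nlinarith

lemma sphere_inter_cap_subset_image_hemisphereChart (hv : ‖v‖ = 1) :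
    sphere (0 : E) 1 ∩ {x | 1 / 2 < ⟪v, x⟫} ⊆ hemisphereChart v '' {y | ‖y‖ ^ 2 ≤ 3 / 4} := by
  rintro x ⟨hx, hcap⟩
  rw [mem_sphere_zero_iff_norm] at hx
  simp only [mem_ofPred_eq] at hcap
  set c := ⟪v, x⟫
  have hy : x - c • v ∈ (ℝ ∙ v)ᗮ := by
    rw [Submodule.mem_orthogonal_singleton_iff_inner_right, inner_sub_right, real_inner_smul_right,
      real_inner_self_eq_norm_sq, hv]
    ring
  have hpyth := norm_add_smul_sq_of_mem_orthogonal hv hy c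
  rw [sub_add_cancel, hx] at hpyth
  refine ⟨⟨x - c • v, hy⟩, ?_, ?_⟩
  · simp only [mem_ofPred_eq, Submodule.coe_norm]
    nlinarith
  · rw [hemisphereChart, Submodule.coe_norm, show 1 - ‖x - c • v‖ ^ 2 = c ^ 2 by linarith,
      Real.sqrt_sq (by linarith), Submodule.coe_mk, sub_add_cancel]

end HemisphereChart

lemma sphere_eq_empty_of_finrank_eq_zero {E : Type*} [NormedAddCommGroup E] [NormedSpace ℝ E]
    [FiniteDimensional ℝ E] (hE : finrank ℝ E = 0) : sphere (0 : E) 1 = ∅ :=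
  have : Subsingleton E := Module.finrank_zero_iff.1 hE
  sphere_eq_empty_of_subsingleton one_ne_zero

section SphereMeasure

variable {E : Type*} [NormedAddCommGroup E] [InnerProductSpace ℝ E] [FiniteDimensional ℝ E]
  [MeasurableSpace E] [BorelSpace E] {m n : ℕ}

lemma isAddHaarMeasure_hausdorffMeasure_orthogonal (hE : finrank ℝ E = m + 1) {v : E}
    (hv : v ≠ 0) : (μH[m] : Measure (ℝ ∙ v)ᗮ).IsAddHaarMeasure := by
  have : Fact (finrank ℝ E = m + 1) := ⟨hE⟩
  have hK := Submodule.finrank_orthogonal_span_singleton (𝕜 := ℝ) (n := m) hv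
  rw [← hK]
  infer_instance

lemma hausdorffMeasure_sphere_inter_cap_lt_top (hE : finrank ℝ E = m + 1) {v : E}
    (hv : ‖v‖ = 1) : μH[m] (sphere (0 : E) 1 ∩ {x | 1 / 2 < ⟪v, x⟫}) < ∞ := by
  have := isAddHaarMeasure_hausdorffMeasure_orthogonal hE (norm_ne_zero_iff.1 (hv ▸ one_ne_zero))
  have hbdd : Bornology.IsBounded {y : (ℝ ∙ v)ᗮ | ‖y‖ ^ 2 ≤ 3 / 4} :=
    (isBounded_closedBall (x := 0) (r := 1)).subset fun y hy => by
      rw [mem_closedBall_zero_iff]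
      nlinarith [norm_nonneg y, mem_ofPred_eq ▸ hy]
  calc μH[m] (sphere (0 : E) 1 ∩ {x | 1 / 2 < ⟪v, x⟫})
      ≤ μH[m] (hemisphereChart v '' {y | ‖y‖ ^ 2 ≤ 3 / 4}) :=
        measure_mono (sphere_inter_cap_subset_image_hemisphereChart hv)
    _ ≤ 2 ^ (m : ℝ) * μH[m] {y : (ℝ ∙ v)ᗮ | ‖y‖ ^ 2 ≤ 3 / 4} :=
        (lipschitzOnWith_hemisphereChart hv).hausdorffMeasure_image_le (Nat.cast_nonneg m)
    _ < ∞ := ENNReal.mul_lt_top (by simp) hbdd.measure_lt_top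

lemma hausdorffMeasure_sphere_lt_top_of_finrank_eq_succ (hE : finrank ℝ E = m + 1) :
    μH[m] (sphere (0 : E) 1) < ∞ := by
  obtain ⟨t, ht⟩ := (isCompact_sphere (0 : E) 1).elim_finite_subcover
    (fun v : sphere (0 : E) 1 => {x | 1 / 2 < ⟪(v : E), x⟫})
    (fun v => isOpen_lt continuous_const (continuous_const.inner continuous_id))
    fun x hx => mem_iUnion.2 ⟨⟨x, hx⟩, by
      simp [mem_sphere_zero_iff_norm.1 hx]; norm_num⟩
  calc μH[m] (sphere (0 : E) 1)
      ≤ μH[m] (⋃ v ∈ t, sphere (0 : E) 1 ∩ {x | 1 / 2 < ⟪(v : E), x⟫}) := by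
        refine measure_mono fun x hx => ?_
        obtain ⟨v, hvt, hxv⟩ := mem_iUnion₂.1 (ht hx)
        exact mem_iUnion₂.2 ⟨v, hvt, hx, hxv⟩
    _ ≤ ∑ v ∈ t, μH[m] (sphere (0 : E) 1 ∩ {x | 1 / 2 < ⟪(v : E), x⟫}) :=
        measure_biUnion_finset_le t _
    _ < ∞ := ENNReal.sum_lt_top.2 fun v _ =>
        hausdorffMeasure_sphere_inter_cap_lt_top hE (mem_sphere_zero_iff_norm.1 v.2)

lemma hausdorffMeasure_sphere_inter_open_pos_of_finrank_eq_succ (hE : finrank ℝ E = m + 1)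
    {U : Set E} (hU : IsOpen U) {x : E} (hx : x ∈ sphere (0 : E) 1 ∩ U) :
    0 < μH[m] (sphere (0 : E) 1 ∩ U) := by
  have hx1 : ‖x‖ = 1 := mem_sphere_zero_iff_norm.1 hx.1
  have := isAddHaarMeasure_hausdorffMeasure_orthogonal hE (norm_ne_zero_iff.1 (hx1 ▸ one_ne_zero))
  set W := ball (0 : (ℝ ∙ x)ᗮ) 1 ∩ hemisphereChart x ⁻¹' U
  have hW : IsOpen W := isOpen_ball.inter (hU.preimage continuous_hemisphereChart)
  have h0W : (0 : (ℝ ∙ x)ᗮ) ∈ W := ⟨mem_ball_self one_pos, by simpa [hemisphereChart] using hx.2⟩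
  have hWU : hemisphereChart x '' W ⊆ sphere (0 : E) 1 ∩ U := by
    rintro _ ⟨y, hy, rfl⟩
    exact ⟨hemisphereChart_mem_sphere hx1 (mem_ball_zero_iff.1 hy.1).le, hy.2⟩
  calc 0 < μH[m] W := hW.measure_pos _ ⟨0, h0W⟩
    _ ≤ 1 ^ (m : ℝ) * μH[m] (hemisphereChart x '' W) :=
        (antilipschitzWith_hemisphereChart hx1).le_hausdorffMeasure_image (Nat.cast_nonneg m) W
    _ ≤ μH[m] (sphere (0 : E) 1 ∩ U) := by
        rw [ENNReal.one_rpow, one_mul]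
        exact measure_mono hWU

lemma hausdorffMeasure_sphere_lt_top (hE : finrank ℝ E = n) :
    μH[(n : ℝ) - 1] (sphere (0 : E) 1) < ∞ := by
  cases n with
  | zero => simp [sphere_eq_empty_of_finrank_eq_zero hE]
  | succ m =>
    rw [Nat.cast_succ, add_sub_cancel_right]
    exact hausdorffMeasure_sphere_lt_top_of_finrank_eq_succ hE

lemma hausdorffMeasure_sphere_inter_open_pos (hE : finrank ℝ E = n) {U : Set E} (hU : IsOpen U)
    {x : E} (hx : x ∈ sphere (0 : E) 1 ∩ U) : 0 < μH[(n : ℝ) - 1] (sphere (0 : E) 1 ∩ U) := by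
  cases n with
  | zero => simp [sphere_eq_empty_of_finrank_eq_zero hE] at hx
  | succ m =>
    rw [Nat.cast_succ, add_sub_cancel_right]
    exact hausdorffMeasure_sphere_inter_open_pos_of_finrank_eq_succ hE hU hx

lemma ContinuousOn.integrableOn_sphere (hE : finrank ℝ E = n) {F : E → ℝ}
    (hF : ContinuousOn F (sphere (0 : E) 1)) : IntegrableOn F (sphere (0 : E) 1) μH[(n : ℝ) - 1] :=
  hF.integrableOn_of_subset_isCompact (isCompact_sphere 0 1) isClosed_sphere.measurableSet
    subset_rfl (hausdorffMeasure_sphere_lt_top hE).ne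

end SphereMeasure

lemma ContinuousOn.setIntegral_eq_zero_iff_of_nonneg {X : Type*} [TopologicalSpace X]
    [MeasurableSpace X] {μ : Measure X} {S : Set X} (hS : MeasurableSet S)
    (hpos : ∀ U, IsOpen U → ∀ x ∈ S ∩ U, 0 < μ (S ∩ U)) {F : X → ℝ} (hF : ContinuousOn F S)
    (hFi : IntegrableOn F S μ) (hnn : ∀ x ∈ S, 0 ≤ F x) :
    ∫ x in S, F x ∂μ = 0 ↔ ∀ x ∈ S, F x = 0 := by
  refine ⟨fun h0 x hx => ?_, fun h => by simp [setIntegral_congr_fun hS h]⟩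
  by_contra hFx
  rw [setIntegral_eq_zero_iff_of_nonneg_ae (ae_restrict_of_forall_mem hS hnn) hFi,
    Filter.EventuallyEq, ae_iff, Measure.restrict_apply' hS] at h0
  obtain ⟨U, hU, hUS⟩ := continuousOn_iff'.1 hF {0}ᶜ isOpen_compl_singleton
  have hxU : x ∈ U ∩ S := hUS ▸ ⟨hFx, hx⟩
  refine (hpos U hU x ⟨hx, hxU.1⟩).ne' ?_
  rw [inter_comm, ← hUS]
  exact h0

lemma log_speed_sub_eq_neg_defect {f a H K R D : ℝ} (ha : a ≠ 0) (hH : H ≠ 0) (hK : K ≠ 0)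
    (hR : R ≠ 0) (hD : D = -f * R * K / a + H) :
    f * (D / H) - a * (D / H) * H / (K * R) = -((a * H - f * K * R) ^ 2 / (a * H * K * R)) := by
  subst hD
  field_simp
  ring

lemma sq_sub_div_eq_zero_iff {p q d : ℝ} (hd : d ≠ 0) : (p - q) ^ 2 / d = 0 ↔ p = q := by
  rw [div_eq_zero_iff, or_iff_left hd, sq_eq_zero_iff, sub_eq_zero]

lemma setIntegral_log_speed_sub_eq_neg_defect {X : Type*} [MeasurableSpace X] {μ : Measure X}
    {S : Set X} (hS : MeasurableSet S) {f a H K R D : X → ℝ}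
    (hi₁ : IntegrableOn (fun x => f x * (D x / H x)) S μ)
    (hi₂ : IntegrableOn (fun x => a x * (D x / H x) * H x / (K x * R x)) S μ)
    (ha : ∀ x ∈ S, a x ≠ 0) (hH : ∀ x ∈ S, H x ≠ 0) (hK : ∀ x ∈ S, K x ≠ 0)
    (hR : ∀ x ∈ S, R x ≠ 0) (hD : ∀ x ∈ S, D x = -f x * R x * K x / a x + H x) :
    ∫ x in S, f x * (D x / H x) ∂μ - ∫ x in S, a x * (D x / H x) * H x / (K x * R x) ∂μ
      = -∫ x in S, (a x * H x - f x * K x * R x) ^ 2 / (a x * H x * K x * R x) ∂μ := by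
  rw [← integral_sub hi₁ hi₂, ← integral_neg]
  exact setIntegral_congr_fun hS fun x hx =>
    log_speed_sub_eq_neg_defect (ha x hx) (hH x hx) (hK x hx) (hR x hx) (hD x hx)

lemma setIntegral_log_speed_sub_eq_neg_defect_nonpos_and_eq_zero_iff {X : Type*}
    [TopologicalSpace X] [MeasurableSpace X] {μ : Measure X} {S : Set X} (hS : MeasurableSet S)
    (hint : ∀ F : X → ℝ, ContinuousOn F S → IntegrableOn F S μ)
    (hpos : ∀ U, IsOpen U → ∀ x ∈ S ∩ U, 0 < μ (S ∩ U)) {f a H K R D : X → ℝ}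
    (hfc : ContinuousOn f S) (hac : ContinuousOn a S) (hHc : ContinuousOn H S)
    (hKc : ContinuousOn K S) (hRc : ContinuousOn R S) (hDc : ContinuousOn D S)
    (ha : ∀ x ∈ S, 0 < a x) (hH : ∀ x ∈ S, 0 < H x) (hK : ∀ x ∈ S, 0 < K x)
    (hR : ∀ x ∈ S, 0 < R x) (hD : ∀ x ∈ S, D x = -f x * R x * K x / a x + H x) :
    ∫ x in S, f x * (D x / H x) ∂μ - ∫ x in S, a x * (D x / H x) * H x / (K x * R x) ∂μ
        = -∫ x in S, (a x * H x - f x * K x * R x) ^ 2 / (a x * H x * K x * R x) ∂μ ∧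
      -∫ x in S, (a x * H x - f x * K x * R x) ^ 2 / (a x * H x * K x * R x) ∂μ ≤ 0 ∧
      (-∫ x in S, (a x * H x - f x * K x * R x) ^ 2 / (a x * H x * K x * R x) ∂μ = 0 ↔
        ∀ x ∈ S, a x * H x = f x * K x * R x) := by
  have hden : ∀ x ∈ S, 0 < a x * H x * K x * R x := fun x hx =>
    mul_pos (mul_pos (mul_pos (ha x hx) (hH x hx)) (hK x hx)) (hR x hx)
  have hDH : ContinuousOn (fun x => D x / H x) S := hDc.div hHc fun x hx => (hH x hx).ne'
  have hdefect_cont : ContinuousOn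
      (fun x => (a x * H x - f x * K x * R x) ^ 2 / (a x * H x * K x * R x)) S :=
    (((hac.mul hHc).sub ((hfc.mul hKc).mul hRc)).pow 2).div (((hac.mul hHc).mul hKc).mul hRc)
      fun x hx => (hden x hx).ne'
  have hdefect_nonneg : ∀ x ∈ S,
      0 ≤ (a x * H x - f x * K x * R x) ^ 2 / (a x * H x * K x * R x) := fun x hx =>
    div_nonneg (sq_nonneg _) (hden x hx).le
  refine ⟨setIntegral_log_speed_sub_eq_neg_defect hS (hint _ (hfc.mul hDH))
      (hint _ (((hac.mul hDH).mul hHc).div (hKc.mul hRc)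
        fun x hx => (mul_pos (hK x hx) (hR x hx)).ne'))
      (fun x hx => (ha x hx).ne') (fun x hx => (hH x hx).ne') (fun x hx => (hK x hx).ne')
      (fun x hx => (hR x hx).ne') hD,
    neg_nonpos.2 (setIntegral_nonneg hS hdefect_nonneg), ?_⟩
  rw [neg_eq_zero, hdefect_cont.setIntegral_eq_zero_iff_of_nonneg hS hpos (hint _ hdefect_cont)
    hdefect_nonneg]
  exact forall₂_congr fun x hx => sq_sub_div_eq_zero_iff (hden x hx).ne'

theorem flow_functional_monotone_general {n : ℕ}
    (f g : EuclideanSpace ℝ (Fin n) → ℝ)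
    (h ρ curv dh dρ : EuclideanSpace ℝ (Fin n) → ℝ → ℝ)
    (xhat uhat : EuclideanSpace ℝ (Fin n) → ℝ → EuclideanSpace ℝ (Fin n))
    (J : ℝ → ℝ)
    (S : Set (EuclideanSpace ℝ (Fin n)))
    (hS : S = Metric.sphere (0 : EuclideanSpace ℝ (Fin n)) 1)
    -- continuity and positivity of the data
    (hf : ContinuousOn f S) (hg : ContinuousOn g S)
    (hgpos : ∀ u ∈ S, 0 < g u)
    (hhpos : ∀ x ∈ S, ∀ t, 0 < h x t) (hρpos : ∀ u ∈ S, ∀ t, 0 < ρ u t)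
    (hcurvpos : ∀ x ∈ S, ∀ t, 0 < curv x t)
    (hhc : ∀ t, ContinuousOn (fun x => h x t) S)
    (hρc : ∀ t, ContinuousOn (fun u => ρ u t) S)
    (hcurvc : ∀ t, ContinuousOn (fun x => curv x t) S)
    (huhatc : ∀ t, ContinuousOn (fun x => uhat x t) S)
    (hdhc : ∀ t, ContinuousOn (fun x => dh x t) S)
    -- the radial-normal correspondence
    (huhatS : ∀ x ∈ S, ∀ t, uhat x t ∈ S)
    (hinv1 : ∀ u ∈ S, ∀ t, uhat (xhat u t) t = u)
    -- the flow equation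
    (hflow : ∀ x ∈ S, ∀ t,
      dh x t = -f x * ρ (uhat x t) t ^ n * curv x t / g (uhat x t) + h x t)
    -- `∂ₜ log ρ(u,t) = ∂ₜ log h(x,t)` at corresponding points
    (hlog : ∀ u ∈ S, ∀ t, dρ u t / ρ u t = dh (xhat u t) t / h (xhat u t) t)
    -- change of variables `(h/𝒦) dx = ρⁿ du`
    (hCoV : ∀ t, ∀ F : EuclideanSpace ℝ (Fin n) → ℝ, ContinuousOn F S →
      ∫ u in S, F (xhat u t) ∂μH[(n : ℝ) - 1]
        = ∫ x in S, F x * h x t / (curv x t * ρ (uhat x t) t ^ n) ∂μH[(n : ℝ) - 1])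
    -- the functional `J` and differentiation under the integral sign
    (hJ : ∀ t, J t = ∫ x in S, f x * Real.log (h x t) ∂μH[(n : ℝ) - 1]
        - ∫ u in S, g u * Real.log (ρ u t) ∂μH[(n : ℝ) - 1])
    (hD1 : ∀ t, HasDerivAt (fun s => ∫ x in S, f x * Real.log (h x s) ∂μH[(n : ℝ) - 1])
        (∫ x in S, f x * (dh x t / h x t) ∂μH[(n : ℝ) - 1]) t)
    (hD2 : ∀ t, HasDerivAt (fun s => ∫ u in S, g u * Real.log (ρ u s) ∂μH[(n : ℝ) - 1])
        (∫ u in S, g u * (dρ u t / ρ u t) ∂μH[(n : ℝ) - 1]) t)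
    (t : ℝ) :
    HasDerivAt J
      (-∫ x in S, (g (uhat x t) * h x t - f x * curv x t * ρ (uhat x t) t ^ n) ^ 2
          / (g (uhat x t) * h x t * curv x t * ρ (uhat x t) t ^ n) ∂μH[(n : ℝ) - 1]) t ∧
    (-∫ x in S, (g (uhat x t) * h x t - f x * curv x t * ρ (uhat x t) t ^ n) ^ 2
          / (g (uhat x t) * h x t * curv x t * ρ (uhat x t) t ^ n) ∂μH[(n : ℝ) - 1]) ≤ 0 ∧
    ((-∫ x in S, (g (uhat x t) * h x t - f x * curv x t * ρ (uhat x t) t ^ n) ^ 2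
          / (g (uhat x t) * h x t * curv x t * ρ (uhat x t) t ^ n) ∂μH[(n : ℝ) - 1]) = 0
      ↔ ∀ x ∈ S, g (uhat x t) * h x t = f x * curv x t * ρ (uhat x t) t ^ n) := by
  subst hS
  have hE := finrank_euclideanSpace_fin (𝕜 := ℝ) (n := n)
  have huhat : MapsTo (fun x => uhat x t) (sphere 0 1) (sphere 0 1) := fun x hx => huhatS x hx t
  have hgu : ContinuousOn (fun x => g (uhat x t)) (sphere 0 1) := hg.comp (huhatc t) huhat
  have hρu : ContinuousOn (fun x => ρ (uhat x t) t ^ n) (sphere 0 1) :=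
    ((hρc t).comp (huhatc t) huhat).pow n
  have hlog_speed : ContinuousOn (fun x => g (uhat x t) * (dh x t / h x t)) (sphere 0 1) :=
    hgu.mul ((hdhc t).div (hhc t) fun x hx => (hhpos x hx t).ne')
  have hCoV_log : ∫ u in sphere 0 1, g u * (dρ u t / ρ u t) ∂μH[(n : ℝ) - 1]
      = ∫ x in sphere 0 1, g (uhat x t) * (dh x t / h x t) * h x t
          / (curv x t * ρ (uhat x t) t ^ n) ∂μH[(n : ℝ) - 1] := by
    rw [← hCoV t _ hlog_speed]
    exact setIntegral_congr_fun isClosed_sphere.measurableSet fun u hu => by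
      simp only [hinv1 u hu t, hlog u hu t]
  obtain ⟨hval, hle, hzero⟩ := setIntegral_log_speed_sub_eq_neg_defect_nonpos_and_eq_zero_iff
    (R := fun x => ρ (uhat x t) t ^ n) isClosed_sphere.measurableSet
    (fun F hF => hF.integrableOn_sphere hE)
    (fun U hU x hx => hausdorffMeasure_sphere_inter_open_pos hE hU hx) hf hgu (hhc t) (hcurvc t)
    hρu (hdhc t) (fun x hx => hgpos _ (huhat hx)) (fun x hx => hhpos x hx t)
    (fun x hx => hcurvpos x hx t) (fun x hx => pow_pos (hρpos _ (huhat hx) t) n)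
    fun x hx => hflow x hx t
  rw [← hCoV_log] at hval
  refine ⟨?_, hle, hzero⟩
  rw [← hval, show J = _ from funext hJ]
  exact (hD1 t).sub (hD2 t)

/-- Along the flow `∂ₜh = −f ρⁿ𝒦/g + h`, the functional
`J(t) = ∫ f log h(·,t) dx − ∫ g log ρ(·,t) du` satisfies
`J'(t) = −∫ (gh − f𝒦ρⁿ)²/(gh𝒦ρⁿ) dx ≤ 0`, with equality iff `gh = f𝒦ρⁿ` on `Sⁿ⁻¹`. -/
theorem flow_functional_monotone {n : ℕ} (hn : 2 ≤ n)
    (f g : EuclideanSpace ℝ (Fin n) → ℝ)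
    (h ρ curv dh dρ : EuclideanSpace ℝ (Fin n) → ℝ → ℝ)
    (xhat uhat : EuclideanSpace ℝ (Fin n) → ℝ → EuclideanSpace ℝ (Fin n))
    (J : ℝ → ℝ)
    (S : Set (EuclideanSpace ℝ (Fin n)))
    (hS : S = Metric.sphere (0 : EuclideanSpace ℝ (Fin n)) 1)
    -- continuity and positivity of the data
    (hf : ContinuousOn f S) (hg : ContinuousOn g S)
    (hfpos : ∀ x ∈ S, 0 < f x) (hgpos : ∀ u ∈ S, 0 < g u)
    (hhpos : ∀ x ∈ S, ∀ t, 0 < h x t) (hρpos : ∀ u ∈ S, ∀ t, 0 < ρ u t)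
    (hcurvpos : ∀ x ∈ S, ∀ t, 0 < curv x t)
    (hhc : ∀ t, ContinuousOn (fun x => h x t) S)
    (hρc : ∀ t, ContinuousOn (fun u => ρ u t) S)
    (hcurvc : ∀ t, ContinuousOn (fun x => curv x t) S)
    (huhatc : ∀ t, ContinuousOn (fun x => uhat x t) S)
    (hdhc : ∀ t, ContinuousOn (fun x => dh x t) S)
    -- the radial-normal correspondence
    (huhatS : ∀ x ∈ S, ∀ t, uhat x t ∈ S) (hxhatS : ∀ u ∈ S, ∀ t, xhat u t ∈ S)
    (hinv1 : ∀ u ∈ S, ∀ t, uhat (xhat u t) t = u)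
    (hinv2 : ∀ x ∈ S, ∀ t, xhat (uhat x t) t = x)
    -- equal total masses
    (htot : ∫ x in S, f x ∂μH[(n : ℝ) - 1] = ∫ u in S, g u ∂μH[(n : ℝ) - 1])
    -- the flow equation
    (hdh : ∀ x ∈ S, ∀ t, HasDerivAt (h x) (dh x t) t)
    (hdρ : ∀ u ∈ S, ∀ t, HasDerivAt (ρ u) (dρ u t) t)
    (hflow : ∀ x ∈ S, ∀ t,
      dh x t = -f x * ρ (uhat x t) t ^ n * curv x t / g (uhat x t) + h x t)
    -- `∂ₜ log ρ(u,t) = ∂ₜ log h(x,t)` at corresponding points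
    (hlog : ∀ u ∈ S, ∀ t, dρ u t / ρ u t = dh (xhat u t) t / h (xhat u t) t)
    -- change of variables `(h/𝒦) dx = ρⁿ du`
    (hCoV : ∀ t, ∀ F : EuclideanSpace ℝ (Fin n) → ℝ, ContinuousOn F S →
      ∫ u in S, F (xhat u t) ∂μH[(n : ℝ) - 1]
        = ∫ x in S, F x * h x t / (curv x t * ρ (uhat x t) t ^ n) ∂μH[(n : ℝ) - 1])
    -- the functional `J` and differentiation under the integral sign
    (hJ : ∀ t, J t = ∫ x in S, f x * Real.log (h x t) ∂μH[(n : ℝ) - 1]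
        - ∫ u in S, g u * Real.log (ρ u t) ∂μH[(n : ℝ) - 1])
    (hD1 : ∀ t, HasDerivAt (fun s => ∫ x in S, f x * Real.log (h x s) ∂μH[(n : ℝ) - 1])
        (∫ x in S, f x * (dh x t / h x t) ∂μH[(n : ℝ) - 1]) t)
    (hD2 : ∀ t, HasDerivAt (fun s => ∫ u in S, g u * Real.log (ρ u s) ∂μH[(n : ℝ) - 1])
        (∫ u in S, g u * (dρ u t / ρ u t) ∂μH[(n : ℝ) - 1]) t)
    (t : ℝ) :
    HasDerivAt J
      (-∫ x in S, (g (uhat x t) * h x t - f x * curv x t * ρ (uhat x t) t ^ n) ^ 2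
          / (g (uhat x t) * h x t * curv x t * ρ (uhat x t) t ^ n) ∂μH[(n : ℝ) - 1]) t ∧
    (-∫ x in S, (g (uhat x t) * h x t - f x * curv x t * ρ (uhat x t) t ^ n) ^ 2
          / (g (uhat x t) * h x t * curv x t * ρ (uhat x t) t ^ n) ∂μH[(n : ℝ) - 1]) ≤ 0 ∧
    ((-∫ x in S, (g (uhat x t) * h x t - f x * curv x t * ρ (uhat x t) t ^ n) ^ 2
          / (g (uhat x t) * h x t * curv x t * ρ (uhat x t) t ^ n) ∂μH[(n : ℝ) - 1]) = 0
      ↔ ∀ x ∈ S, g (uhat x t) * h x t = f x * curv x t * ρ (uhat x t) t ^ n) :=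
  flow_functional_monotone_general f g h ρ curv dh dρ xhat uhat J S hS hf hg hgpos hhpos hρpos
    hcurvpos hhc hρc hcurvc huhatc hdhc huhatS hinv1 hflow hlog hCoV hJ hD1 hD2 t
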